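/- Let k ≥ 1 and 0 ≤ V_1 ≤ ⋯ ≤ V_k, and for each i let ρ_i be the indicator function of S_{V_i}, where {S_t : t ≥ 0} is an increasing family of Borel subsets of ℝ^d with vol(S_t) = t. Then the affine main term satisfies M^affine_{d,k} = Σ_{(α,β)} M^affine_{α,β} ∏_{i=1}^{m} V_{α_i}, where the sum is over all divisions (α,β) of {1,…,k} and m = #α. -/

import Mathlib

open MeasureTheory Matrix ProbabilityTheory Filter Topology
open scoped BigOperators ENNReal NNReal

noncomputable section

namespace LatticePaper

/-- `SL d` : the group `SL_d(ℝ)`. -/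
abbrev SL (d : ℕ) := Matrix.SpecialLinearGroup (Fin d) ℝ

instance (d : ℕ) : MeasurableSpace (SL d) :=
  MeasurableSpace.comap (fun g (i j : Fin d) => (g : Matrix (Fin d) (Fin d) ℝ) i j)
    inferInstance

/-- The affine unimodular lattice `ℤ^d g + ξ` (row vector convention). -/
def affLat {d : ℕ} (g : SL d) (ξ : Fin d → ℝ) : Set (Fin d → ℝ) :=
  { x | ∃ m : Fin d → ℤ, x = (fun i => (m i : ℝ)) ᵥ* (g : Matrix (Fin d) (Fin d) ℝ) + ξ }

/-- The congruence lattice `(ℤ^d + p/q) g`. -/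
def congLat {d : ℕ} (p : Fin d → ℤ) (q : ℕ) (g : SL d) : Set (Fin d → ℝ) :=
  { x | ∃ m : Fin d → ℤ,
      x = (fun i => (m i : ℝ) + (p i : ℝ) / (q : ℝ)) ᵥ* (g : Matrix (Fin d) (Fin d) ℝ) }

/-- Multiplication in `ASL_d(ℝ)` in the coordinates `(g, ξ)` (row vector convention). -/
def aslMul {d : ℕ} (x y : SL d × (Fin d → ℝ)) : SL d × (Fin d → ℝ) :=
  (x.1 * y.1, x.2 ᵥ* (y.1 : Matrix (Fin d) (Fin d) ℝ) + y.2)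

/-- A real valued function is bounded. -/
def IsBdd {α : Type*} (f : α → ℝ) : Prop := ∃ C, ∀ x, |f x| ≤ C

/-- `μ` represents the unique right-`ASL_d(ℝ)`-invariant Borel probability measure `μ_Y` on the
space `Y = ASL_d(ℤ)\ASL_d(ℝ)` of affine unimodular lattices: it is a probability measure on the
coordinates `(g, ξ)` whose pushforward to the space of affine lattices is right invariant, i.e.
integration of any bounded measurable function of the affine lattice is invariant under the
right translations of `ASL_d(ℝ)`. -/
structure IsHaarY {d : ℕ} (μ : Measure (SL d × (Fin d → ℝ))) : Prop where
  prob : IsProbabilityMeasure μ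
  inv : ∀ (h : SL d × (Fin d → ℝ)) (f : SL d × (Fin d → ℝ) → ℝ),
      Measurable f → IsBdd f →
      (∀ x y, affLat x.1 x.2 = affLat y.1 y.2 → f x = f y) →
      ∫ x, f (aslMul x h) ∂μ = ∫ x, f x ∂μ

/-- `μ` represents the unique right-`SL_d(ℝ)`-invariant Borel probability measure `μ_q` on the
space `Y_{p/q}` of congruence lattices. -/
structure IsHaarCong {d : ℕ} (p : Fin d → ℤ) (q : ℕ) (μ : Measure (SL d)) : Prop where
  prob : IsProbabilityMeasure μ
  inv : ∀ (h : SL d) (f : SL d → ℝ),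
      Measurable f → IsBdd f →
      (∀ x y, congLat p q x = congLat p q y → f x = f y) →
      ∫ x, f (x * h) ∂μ = ∫ x, f x ∂μ

/-- Number of points of `Λ` lying in `S` (as a natural number; junk value `0` if infinite). -/
def latCount {d : ℕ} (S Λ : Set (Fin d → ℝ)) : ℕ := (S ∩ Λ).ncard

/-- `gcd(p, q) = 1` for an integer vector `p` and `q : ℕ`. -/
def vecCoprime {k : ℕ} (l : Fin k → ℤ) (t : ℕ) : Prop :=
  Nat.gcd t (Finset.univ.gcd fun i => (l i).natAbs) = 1

/-- `t_{i-1}`, the previous entry of a tuple of times (with the convention `t_{-1} = 0`). -/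
def prevVal {n : ℕ} (t : Fin n → ℝ) (i : Fin n) : ℝ :=
  if h : (i : ℕ) = 0 then 0
  else t ⟨(i : ℕ) - 1, lt_of_le_of_lt (Nat.sub_le _ _) i.isLt⟩

/-- The joint distribution of `(N^λ(t_1), …, N^λ(t_n))` for a Poisson process of intensity `λ`
on the non-negative real line, at times `t_1 ≤ ⋯ ≤ t_n`: the increments are independent and
Poisson distributed with means `λ(t_i - t_{i-1})`. -/
def poissonFdd (lam : ℝ) {n : ℕ} (t : Fin n → ℝ) : Measure (Fin n → ℝ) :=
  Measure.map (fun (y : Fin n → ℕ) (i : Fin n) => ∑ j : Fin n, if j ≤ i then (y j : ℝ) else 0)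
    (Measure.pi fun i : Fin n => poissonMeasure (Real.toNNReal (lam * (t i - prevVal t i))))

/-- The joint distribution of `(B(t_1), …, B(t_n))` for standard one-dimensional Brownian
motion, at times `t_1 ≤ ⋯ ≤ t_n`: independent Gaussian increments of variance `t_i - t_{i-1}`. -/
def brownianFdd {n : ℕ} (t : Fin n → ℝ) : Measure (Fin n → ℝ) :=
  Measure.map (fun (y : Fin n → ℝ) (i : Fin n) => ∑ j : Fin n, if j ≤ i then y j else 0)
    (Measure.pi fun i : Fin n => gaussianReal 0 (Real.toNNReal (t i - prevVal t i)))

/-- The `k`-fold Siegel transform `F̂(Λ) = ∑_{m_1, …, m_k ∈ Λ} F(m_1, …, m_k)`. -/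
def siegel {d k : ℕ} (F : (Fin k → Fin d → ℝ) → ℝ) (Λ : Set (Fin d → ℝ)) : ℝ :=
  ∑' v : {v : Fin k → Fin d → ℝ // ∀ i, v i ∈ Λ}, F v

/-- The Siegel transform `f̂(Λ) = ∑_{m ∈ Λ} f(m)` of a function on `ℝ^d`. -/
def siegel1 {d : ℕ} (f : (Fin d → ℝ) → ℝ) (Λ : Set (Fin d → ℝ)) : ℝ :=
  ∑' v : Λ, f v

/-- The embedding `Fin (n-1) → Fin n`, `i ↦ i + 1` (used to delete the first row/column). -/
def succEmb (n : ℕ) : Fin (n - 1) → Fin n :=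
  fun i => ⟨i.1 + 1, by have := i.isLt; omega⟩

/-- `D` is one of Rogers' admissible `k × r` integral matrices with parameter `u`, with the
(unique) strictly increasing choice of pivot rows `π`: the entries of `D` have collective
gcd `1`, the rows `π 0 < π 1 < ⋯` of `D` form `u·Id_r`, and all entries of column `j` above
the row `π j` vanish. -/
def AdmissiblePivots {k r : ℕ} (u : ℕ) (D : Matrix (Fin k) (Fin r) ℤ) (π : Fin r → Fin k) :
    Prop :=
  (Finset.univ.gcd (fun pr : Fin k × Fin r => D pr.1 pr.2) = 1) ∧ StrictMono π ∧
  (∀ j j' : Fin r, D (π j) j' = if j' = j then (u : ℤ) else 0) ∧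
  (∀ (j : Fin r) (i : Fin k), i < π j → D i j = 0)

/-- Rogers' admissibility condition: membership in `𝔇^k_{r,u}`. -/
def IsAdmissible {k r : ℕ} (u : ℕ) (D : Matrix (Fin k) (Fin r) ℤ) : Prop :=
  ∃ π : Fin r → Fin k, AdmissiblePivots u D π

/-- `N(D, u)`: the number of `v ∈ {0, 1, …, u-1}^r` with `(1/u) D v ∈ ℤ^k`. -/
def Ncount {k r : ℕ} (u : ℕ) (D : Matrix (Fin k) (Fin r) ℤ) : ℕ :=
  Nat.card {v : Fin r → Fin u // ∀ i : Fin k, (u : ℤ) ∣ ∑ j : Fin r, D i j * ((v j : ℕ) : ℤ)}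

/-- Replace the first column of a matrix by (first column) − (sum of the other columns). -/
def colSub {k m : ℕ} (D' : Matrix (Fin k) (Fin m) ℤ) : Matrix (Fin k) (Fin m) ℤ :=
  fun i j => if (j : ℕ) = 0 then 2 * D' i j - ∑ j' : Fin m, D' i j' else D' i j

/-- The family `𝔄^k_{m,u}`: matrices `D̃'` obtained from some `D ∈ 𝔇^{k-1}_{m-1,u}` by forming
the `k × m` matrix `D'` whose first row is `(u, 0, …, 0)`, whose first column is all `u`'s and
whose remaining block is `D`, and then replacing the first column of `D'` by the first column
minus the sum of all the other columns. -/
def frakA (k m u : ℕ) : Set (Matrix (Fin k) (Fin m) ℤ) :=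
  {E | ∃ (hk : 0 < k) (hm : 0 < m) (D' : Matrix (Fin k) (Fin m) ℤ),
    E = colSub D' ∧
    (∀ j : Fin m, D' ⟨0, hk⟩ j = if (j : ℕ) = 0 then (u : ℤ) else 0) ∧
    (∀ i : Fin k, D' i ⟨0, hm⟩ = (u : ℤ)) ∧
    IsAdmissible u (D'.submatrix (succEmb k) (succEmb m))}

/-- The pivot index set `I_D ⊆ {1, …, k}` of an admissible matrix: the rows that carry the
pivot (`u·Id`) entries; equivalently (for admissible `D` with `u ≥ 1`) the rows `i` having a
nonzero entry in some column whose entries above row `i` all vanish. -/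
def pivotRows {k m : ℕ} (D : Matrix (Fin k) (Fin m) ℤ) : Set (Fin k) :=
  {i | ∃ j : Fin m, D i j ≠ 0 ∧ ∀ i' : Fin k, i' < i → D i' j = 0}

/-- The collection `𝔐^k` (in sizes `k × m`): it consists of `Id_k` (for `m = k`), the all-ones
column (for `m = 1`), and those `D̃' ∈ 𝔄^k_{m,1}` (`2 ≤ m ≤ k-1`) all of whose entries lie in
`{0, 1}` with exactly one nonzero entry in each row. -/
def frakM (k m : ℕ) : Set (Matrix (Fin k) (Fin m) ℤ) :=
  {E | (m = k ∧ E = fun (i : Fin k) (j : Fin m) => if (i : ℕ) = (j : ℕ) then (1 : ℤ) else 0)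
    ∨ (m = 1 ∧ E = fun (_ : Fin k) (_ : Fin m) => (1 : ℤ))
    ∨ (2 ≤ m ∧ m ≤ k - 1 ∧ E ∈ frakA k m 1 ∧ (∀ i j, E i j = 0 ∨ E i j = 1) ∧
        ∀ i : Fin k, ∃! j : Fin m, E i j ≠ 0)}

/-- The main term `M^{affine}_{d,k}` of the joint moment
`𝔼(∏ N_i) = Σ_{D̃' ∈ 𝔐^k} ∫_{(ℝ^d)^m} ∏_{i} ρ_i(row_i(D̃' (y_1; …; y_m)))`, where `ρ_i` is the
indicator function of `S_{V_i}`. -/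
def Maff (d k : ℕ) (S : ℝ → Set (Fin d → ℝ)) (V : Fin k → ℝ) : ℝ :=
  ∑ m ∈ Finset.Icc 1 k, ∑' E : frakM k m,
    ∫ y : Fin m → Fin d → ℝ,
      ∏ i : Fin k,
        Set.indicator (S (V i)) (fun _ => (1 : ℝ))
          (∑ j : Fin m, (((E : Matrix (Fin k) (Fin m) ℤ) i j : ℝ)) • y j)

/-- `M^{affine}_{α,β} = #{D̃' ∈ 𝔐^k : I_{D̃'} = α}` for a division `(α, β)` of `{1, …, k}`. -/
def MaffCount (k : ℕ) (α : Finset (Fin k)) : ℕ :=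
  Nat.card {E : Matrix (Fin k) (Fin α.card) ℤ // E ∈ frakM k α.card ∧ pivotRows E = ↑α}

/-!
Every matrix of `𝔐^k` of width `m` is the `0/1` matrix of a surjection `c : Fin k → Fin m`
(row `i` has its single `1` in column `c i`), and its pivot rows are the least elements of the
fibres of `c`. Since the sets `S (V i)` increase with `i`, the factors of the integrand belonging to
one fibre multiply to the indicator of `S (V a)` at the least element `a` of that fibre, so the
integral factorises into `∏ vol (S (V a)) = ∏ V a` over the pivot rows `a`. Grouping the matrices
by their set of pivot rows gives the formula.
-/

lemma prod_indicator_one_of_monotone {ι X R : Type*} [LinearOrder ι] [CommSemiring R]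
    {T : ι → Set X} (hT : Monotone T) {s : Finset ι} (hs : s.Nonempty) (x : X) :
    ∏ i ∈ s, (T i).indicator (fun _ => (1 : R)) x = (T (s.min' hs)).indicator (fun _ => 1) x := by
  have hinter : ⋂ i ∈ s, T i = T (s.min' hs) :=
    (Set.biInter_subset_of_mem (s.min'_mem hs)).antisymm
      (Set.subset_iInter₂ fun i hi => hT (s.min'_le i hi))
  rw [prod_indicator_const_apply, hinter]
  congr 1
  ext
  simp

section FirstPreimage

variable {ι κ : Type*} [Fintype ι] [LinearOrder ι] [DecidableEq κ] {c : ι → κ}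

def firstPreimage (hc : Function.Surjective c) (j : κ) : ι :=
  (Finset.univ.filter (c · = j)).min' (by obtain ⟨i, hi⟩ := hc j; exact ⟨i, by simp [hi]⟩)

variable (hc : Function.Surjective c)

lemma apply_firstPreimage (j : κ) : c (firstPreimage hc j) = j :=
  (Finset.mem_filter.1 (Finset.min'_mem (Finset.univ.filter (c · = j)) _)).2

lemma firstPreimage_apply_le (i : ι) : firstPreimage hc (c i) ≤ i :=
  Finset.min'_le _ i (by simp)

lemma firstPreimage_injective : Function.Injective (firstPreimage hc) :=
  Function.LeftInverse.injective (apply_firstPreimage hc)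

lemma prod_indicator_comp_eq_prod_firstPreimage [Fintype κ] {X R : Type*} [CommSemiring R]
    {T : ι → Set X} (hT : Monotone T) (y : κ → X) :
    ∏ i, (T i).indicator (fun _ => (1 : R)) (y (c i)) =
      ∏ j, (T (firstPreimage hc j)).indicator (fun _ => 1) (y j) := by
  rw [← Finset.prod_fiberwise Finset.univ c]
  refine Finset.prod_congr rfl fun j _ => ?_
  rw [Finset.prod_congr rfl fun i hi => by rw [(Finset.mem_filter.1 hi).2]]
  exact prod_indicator_one_of_monotone hT _ _

end FirstPreimage

lemma integral_prod_indicator_pi {ι X : Type*} [Fintype ι] [MeasureSpace X]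
    [SigmaFinite (volume : Measure X)] {A : ι → Set X} (hA : ∀ i, MeasurableSet (A i)) :
    ∫ y : ι → X, ∏ i, (A i).indicator (fun _ => (1 : ℝ)) (y i) = ∏ i, volume.real (A i) := by
  rw [volume_pi, integral_fintype_prod_eq_prod]
  simp [integral_indicator_const _ (hA _)]

def selMatrix {ι κ : Type*} [DecidableEq κ] (c : ι → κ) : Matrix ι κ ℤ :=
  Matrix.of fun i j => if j = c i then 1 else 0

lemma sum_selMatrix_smul {ι κ M : Type*} [Fintype κ] [DecidableEq κ] [AddCommMonoid M]
    [Module ℝ M] (c : ι → κ) (y : κ → M) (i : ι) :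
    ∑ j, ((selMatrix c i j : ℤ) : ℝ) • y j = y (c i) := by
  simp [selMatrix, ite_smul]

def pivotRowFinset {k m : ℕ} (E : Matrix (Fin k) (Fin m) ℤ) : Finset (Fin k) :=
  (Set.toFinite (pivotRows E)).toFinset

lemma pivotRowFinset_eq_iff {k m : ℕ} {E : Matrix (Fin k) (Fin m) ℤ} {α : Finset (Fin k)} :
    pivotRowFinset E = α ↔ pivotRows E = ↑α := by
  rw [← Finset.coe_inj, pivotRowFinset, Set.Finite.coe_toFinset]

section SelMatrix

variable {k m : ℕ} {c : Fin k → Fin m}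

lemma pivotRows_selMatrix (hc : Function.Surjective c) :
    pivotRows (selMatrix c) = Set.range (firstPreimage hc) := by
  ext i
  simp only [pivotRows, selMatrix, Matrix.of_apply, ne_eq, ite_eq_right_iff, one_ne_zero,
    imp_false, not_not, Set.mem_ofPred_eq, Set.mem_range]
  constructor
  · rintro ⟨j, rfl, habove⟩
    refine ⟨c i, (firstPreimage_apply_le hc i).antisymm (not_lt.1 fun hlt => ?_)⟩
    exact habove _ hlt (apply_firstPreimage hc _).symm
  · rintro ⟨j, rfl⟩
    refine ⟨j, (apply_firstPreimage hc j).symm, fun i' hi' hj => ?_⟩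
    exact (firstPreimage_apply_le hc i').not_gt (hj ▸ hi')

lemma pivotRowFinset_selMatrix (hc : Function.Surjective c) :
    pivotRowFinset (selMatrix c) = Finset.univ.image (firstPreimage hc) := by
  rw [pivotRowFinset_eq_iff, pivotRows_selMatrix hc, Finset.coe_image, Finset.coe_univ,
    Set.image_univ]

lemma card_pivotRowFinset_selMatrix (hc : Function.Surjective c) :
    (pivotRowFinset (selMatrix c)).card = m := by
  rw [pivotRowFinset_selMatrix hc, Finset.card_image_of_injective _ (firstPreimage_injective hc),
    Finset.card_univ, Fintype.card_fin]

lemma integral_prod_indicator_selMatrix {X : Type*} [AddCommMonoid X] [Module ℝ X]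
    [MeasureSpace X] [SigmaFinite (volume : Measure X)] {T : Fin k → Set X} (hT : Monotone T)
    (hTm : ∀ i, MeasurableSet (T i)) (hc : Function.Surjective c) :
    ∫ y : Fin m → X, ∏ i, (T i).indicator (fun _ => (1 : ℝ))
        (∑ j, ((selMatrix c i j : ℤ) : ℝ) • y j) =
      ∏ a ∈ pivotRowFinset (selMatrix c), volume.real (T a) := by
  simp_rw [sum_selMatrix_smul, prod_indicator_comp_eq_prod_firstPreimage hc hT]
  rw [integral_prod_indicator_pi fun j => hTm _, pivotRowFinset_selMatrix hc,
    Finset.prod_image fun a _ b _ h => firstPreimage_injective hc h]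

end SelMatrix

lemma exists_eq_selMatrix_of_zero_or_one {ι κ : Type*} [DecidableEq κ] {E : Matrix ι κ ℤ}
    (h01 : ∀ i j, E i j = 0 ∨ E i j = 1) (huniq : ∀ i, ∃! j, E i j ≠ 0) :
    ∃ c : ι → κ, E = selMatrix c := by
  choose c hc hcuniq using huniq
  refine ⟨c, Matrix.ext fun i j => ?_⟩
  by_cases hj : j = c i
  · subst hj
    simpa [selMatrix, hc i] using h01 i (c i)
  · simpa [selMatrix, hj] using mt (hcuniq i j) hj

lemma exists_ne_zero_of_mem_frakA {k m u : ℕ} (hu : u ≠ 0) {E : Matrix (Fin k) (Fin m) ℤ}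
    (hE : E ∈ frakA k m u) (j : Fin m) : ∃ i, E i j ≠ 0 := by
  obtain ⟨hk, hm, D', rfl, hrow, -, π, -, -, hpiv, -⟩ := hE
  by_cases hj : (j : ℕ) = 0
  · refine ⟨⟨0, hk⟩, ?_⟩
    have hsum : ∑ j', D' ⟨0, hk⟩ j' = u := by
      rw [Fintype.sum_eq_single ⟨0, hm⟩ fun j' hj' => by simp [hrow, Fin.ext_iff.not.1 hj'], hrow]
      rfl
    have hpivot : D' ⟨0, hk⟩ j = u := by rw [hrow, if_pos hj]
    simp only [colSub, if_pos hj, hpivot, hsum]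
    omega
  · obtain ⟨j0, rfl⟩ : ∃ j0, succEmb m j0 = j :=
      ⟨⟨j - 1, by omega⟩, Fin.ext (by simp [succEmb]; omega)⟩
    refine ⟨succEmb k (π j0), ?_⟩
    have hpivot : D' (succEmb k (π j0)) (succEmb m j0) = u := by simpa using hpiv j0 j0
    simp [colSub, hj, hpivot, hu]

section FrakM

variable {k m : ℕ} {E : Matrix (Fin k) (Fin m) ℤ}

lemma exists_eq_selMatrix_of_mem_frakM (hE : E ∈ frakM k m) : ∃ c, E = selMatrix c := by
  rcases hE with ⟨rfl, rfl⟩ | ⟨rfl, rfl⟩ | ⟨-, -, -, h01, huniq⟩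
  · exact ⟨id, Matrix.ext fun i j => by simp [selMatrix, Fin.ext_iff, eq_comm]⟩
  · exact ⟨fun _ => 0, Matrix.ext fun i j => by simp [selMatrix, Fin.fin_one_eq_zero j]⟩
  · exact exists_eq_selMatrix_of_zero_or_one h01 huniq

lemma frakM_finite (k m : ℕ) : (frakM k m).Finite :=
  (Set.finite_range selMatrix).subset fun _ hE =>
    (exists_eq_selMatrix_of_mem_frakM hE).imp fun _ h => h.symm

lemma exists_ne_zero_of_mem_frakM (hk : 0 < k) (hE : E ∈ frakM k m) (j : Fin m) :
    ∃ i, E i j ≠ 0 := by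
  rcases hE with ⟨rfl, rfl⟩ | ⟨rfl, rfl⟩ | ⟨-, -, hA, -, -⟩
  · exact ⟨j, by simp⟩
  · exact ⟨⟨0, hk⟩, one_ne_zero⟩
  · exact exists_ne_zero_of_mem_frakA one_ne_zero hA j

lemma exists_surjective_eq_selMatrix_of_mem_frakM (hk : 0 < k) (hE : E ∈ frakM k m) :
    ∃ c, Function.Surjective c ∧ E = selMatrix c := by
  obtain ⟨c, rfl⟩ := exists_eq_selMatrix_of_mem_frakM hE
  refine ⟨c, fun j => ?_, rfl⟩
  obtain ⟨i, hi⟩ := exists_ne_zero_of_mem_frakM hk hE j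
  exact ⟨i, by simpa [selMatrix, eq_comm] using hi⟩

end FrakM

lemma integral_prod_indicator_frakM {k m : ℕ} (hk : 0 < k) {X : Type*} [AddCommMonoid X]
    [Module ℝ X] [MeasureSpace X] [SigmaFinite (volume : Measure X)] {T : Fin k → Set X}
    (hT : Monotone T) (hTm : ∀ i, MeasurableSet (T i)) {E : Matrix (Fin k) (Fin m) ℤ}
    (hE : E ∈ frakM k m) :
    ∫ y : Fin m → X, ∏ i, (T i).indicator (fun _ => (1 : ℝ)) (∑ j, (E i j : ℝ) • y j) =
      ∏ a ∈ pivotRowFinset E, volume.real (T a) := by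
  obtain ⟨c, hc, rfl⟩ := exists_surjective_eq_selMatrix_of_mem_frakM hk hE
  exact integral_prod_indicator_selMatrix hT hTm hc

def pivotCount (k m : ℕ) (α : Finset (Fin k)) : ℕ :=
  Nat.card {E : Matrix (Fin k) (Fin m) ℤ // E ∈ frakM k m ∧ pivotRows E = ↑α}

lemma pivotCount_eq_zero {k m : ℕ} (hk : 0 < k) {α : Finset (Fin k)} (hα : α.card ≠ m) :
    pivotCount k m α = 0 := by
  rw [pivotCount, Nat.card_eq_zero]
  refine Or.inl ⟨?_⟩
  rintro ⟨E, hE, hpiv⟩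
  apply hα
  obtain ⟨c, hc, rfl⟩ := exists_surjective_eq_selMatrix_of_mem_frakM hk hE
  rw [← pivotRowFinset_eq_iff.2 hpiv, card_pivotRowFinset_selMatrix hc]

lemma tsum_frakM_comp_pivotRowFinset (k m : ℕ) (f : Finset (Fin k) → ℝ) :
    ∑' E : frakM k m, f (pivotRowFinset E.1) = ∑ α, (pivotCount k m α : ℝ) * f α := by
  classical
  have := (frakM_finite k m).fintype
  rw [tsum_fintype, ← Finset.sum_fiberwise Finset.univ fun E : frakM k m => pivotRowFinset E.1]
  refine Finset.sum_congr rfl fun α _ => ?_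
  rw [Finset.sum_congr rfl fun E hE => by rw [(Finset.mem_filter.1 hE).2], Finset.sum_const,
    nsmul_eq_mul, pivotCount, ← Nat.card_congr (Equiv.subtypeSubtypeEquivSubtypeInter _ _),
    Nat.card_eq_fintype_card, Fintype.card_subtype]
  simp only [pivotRowFinset_eq_iff]

lemma sum_Icc_pivotCount_mul {k : ℕ} (α : Finset (Fin k)) (x : ℝ) :
    ∑ m ∈ Finset.Icc 1 k, (pivotCount k m α : ℝ) * x =
      if α.Nonempty then (MaffCount k α : ℝ) * x else 0 := by
  have hterm : ∀ m ∈ Finset.Icc 1 k, (pivotCount k m α : ℝ) * x =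
      if α.card = m then (MaffCount k α : ℝ) * x else 0 := by
    intro m hm
    split_ifs with hα
    · subst hα; rfl
    · rw [pivotCount_eq_zero (by grind) hα, Nat.cast_zero, zero_mul]
  rw [Finset.sum_congr rfl hterm, Finset.sum_ite_eq]
  have hαk : α.card ≤ k := by simpa using α.card_le_univ
  simp [Finset.one_le_card, hαk]

theorem main_term_affine_general
    (d k : ℕ)
    (V : Fin k → ℝ) (hV0 : ∀ i, 0 ≤ V i) (hVmono : Monotone V)
    (S : ℝ → Set (Fin d → ℝ))
    (hSmeas : ∀ t : ℝ, 0 ≤ t → MeasurableSet (S t))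
    (hSmono : ∀ s t : ℝ, 0 ≤ s → s ≤ t → S s ⊆ S t)
    (hSvol : ∀ t : ℝ, 0 ≤ t → volume (S t) = ENNReal.ofReal t) :
    Maff d k S V =
      ∑ α ∈ Finset.univ.powerset.filter (fun α : Finset (Fin k) => α.Nonempty),
        (MaffCount k α : ℝ) * ∏ a ∈ α, V a := by
  have hT : Monotone fun i => S (V i) := fun i i' h => hSmono _ _ (hV0 i) (hVmono h)
  have hvol : ∀ a, volume.real (S (V a)) = V a := fun a => by
    rw [measureReal_def, hSvol _ (hV0 a), ENNReal.toReal_ofReal (hV0 a)]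
  calc Maff d k S V = ∑ m ∈ Finset.Icc 1 k, ∑ α, (pivotCount k m α : ℝ) * ∏ a ∈ α, V a := by
        refine Finset.sum_congr rfl fun m hm => ?_
        have hk : 0 < k := by grind
        simp_rw [integral_prod_indicator_frakM hk hT (fun i => hSmeas _ (hV0 i)) (Subtype.prop _),
          hvol]
        exact tsum_frakM_comp_pivotRowFinset k m fun α => ∏ a ∈ α, V a
    _ = ∑ α, ∑ m ∈ Finset.Icc 1 k, (pivotCount k m α : ℝ) * ∏ a ∈ α, V a := Finset.sum_comm
    _ = _ := by
        simp_rw [sum_Icc_pivotCount_mul, Finset.powerset_univ, Finset.sum_filter]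

/-- Lemma `thmsodmainterm`.
Let `k ≥ 1`, `0 ≤ V_1 ≤ ⋯ ≤ V_k`, and let `ρ_i` be the indicator function of `S_{V_i}`, where
`{S_t : t ≥ 0}` is an increasing family of Borel subsets of `ℝ^d` with `vol(S_t) = t`.  Then
`M^{affine}_{d,k} = Σ_{(α,β)} M^{affine}_{α,β} ∏_{i=1}^{m} V_{α_i}`, the sum being over all
divisions `(α, β)` of `{1, …, k}` (`α ≠ ∅`). -/
theorem main_term_affine
    (d k : ℕ) (hd : 1 ≤ d) (hk : 1 ≤ k)
    (V : Fin k → ℝ) (hV0 : ∀ i, 0 ≤ V i) (hVmono : Monotone V)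
    (S : ℝ → Set (Fin d → ℝ))
    (hSmeas : ∀ t : ℝ, 0 ≤ t → MeasurableSet (S t))
    (hSmono : ∀ s t : ℝ, 0 ≤ s → s ≤ t → S s ⊆ S t)
    (hSvol : ∀ t : ℝ, 0 ≤ t → volume (S t) = ENNReal.ofReal t) :
    Maff d k S V =
      ∑ α ∈ Finset.univ.powerset.filter (fun α : Finset (Fin k) => α.Nonempty),
        (MaffCount k α : ℝ) * ∏ a ∈ α, V a :=
  main_term_affine_general d k V hV0 hVmono S hSmeas hSmono hSvol

end LatticePaper
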